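/- arXiv:2403.11727 — 8 statements merged into one kernel-verified Lean document; each statement's English description precedes it below -/
import Mathlib

section
/- Let n ≥ 1, λ ∈ ℝ, d ∈ ℝⁿ, and set d̄ := (1/n) Σᵢ dᵢ. Let V₁ ∈ ℝ^{s₁×n} and V₂ ∈ ℝ^{s₂×n} satisfy V₁e = 0 and V₂e = 0, let W ∈ ℝ^{(s₁+s₂)×n} be the vertical stacking of V₁ and V₂, and assume W·Wᵀ is invertible. Define S := {g ∈ ℝⁿ : eᵀg = eᵀd, V₁g = (1−λ)V₁d, V₂g = (1+λ)V₂d} and A := (1/n)J + Wᵀ(W Wᵀ)⁻¹ U, where U ∈ ℝ^{(s₁+s₂)×n} is the vertical stacking of (1−λ)V₁ and (1+λ)V₂. Then A·d ∈ S, and A·d is the unique point of S at minimal Euclidean distance from d̄·e; that is, ‖A d − d̄ e‖₂ < ‖g − d̄ e‖₂ for every g ∈ S with g ≠ A d. -/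
/-!
With `c = d̄` and `y = (W Wᵀ)⁻¹ U d` we have `A d = c e + Wᵀ y`. Since `W e = 0`, this gives
`W (A d) = U d` and `eᵀ Wᵀ y = 0`, so `A d ∈ S`. For `g ∈ S`, both `g - c e` and `A d - c e = Wᵀ y`
solve `W x = U d`; their difference lies in `ker W`, which is orthogonal to the range of `Wᵀ`,
so Pythagoras gives `‖g - c e‖² = ‖g - A d‖² + ‖Wᵀ y‖²`.
-/

open Matrix

section

variable {m m₁ m₂ n p R : Type*} [Fintype n]

theorem dotProduct_transpose_mulVec_eq_zero [Fintype m] [CommSemiring R] {W : Matrix m n R}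
    {x : n → R} (hx : W *ᵥ x = 0) (y : m → R) : x ⬝ᵥ (Wᵀ *ᵥ y) = 0 := by
  rw [dotProduct_mulVec, vecMul_transpose, hx, zero_dotProduct]

theorem mulVec_transpose_mulVec_inv_mulVec [Fintype m] [DecidableEq m] [CommRing R]
    {W : Matrix m n R} (hW : IsUnit (W * Wᵀ).det) (b : m → R) :
    W *ᵥ (Wᵀ *ᵥ ((W * Wᵀ)⁻¹ *ᵥ b)) = b := by
  rw [mulVec_mulVec, mulVec_mulVec, mul_nonsing_inv _ hW, one_mulVec]

theorem sum_sq_add_of_dotProduct_eq_zero {x y : n → ℝ} (h : x ⬝ᵥ y = 0) :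
    ∑ i, (x + y) i ^ 2 = ∑ i, x i ^ 2 + ∑ i, y i ^ 2 := by
  have hsq (v : n → ℝ) : ∑ i, v i ^ 2 = v ⬝ᵥ v := by simp only [dotProduct, sq]
  rw [hsq, hsq, hsq, add_dotProduct, dotProduct_add, dotProduct_add, dotProduct_comm y x, h]
  ring

theorem sum_sq_lt_sum_sq_of_mulVec_eq [Fintype m] {W : Matrix m n ℝ} (y : m → ℝ) {x : n → ℝ}
    (hx : W *ᵥ x = W *ᵥ (Wᵀ *ᵥ y)) (hne : x ≠ Wᵀ *ᵥ y) :
    ∑ i, (Wᵀ *ᵥ y) i ^ 2 < ∑ i, x i ^ 2 := by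
  set z := x - Wᵀ *ᵥ y
  have hWz : W *ᵥ z = 0 := by rw [mulVec_sub, hx, sub_self]
  obtain ⟨i, hi⟩ : ∃ i, z i ≠ 0 := Function.ne_iff.mp (sub_ne_zero.mpr hne)
  have hz : 0 < ∑ i, z i ^ 2 :=
    Finset.sum_pos' (fun _ _ => sq_nonneg _) ⟨i, Finset.mem_univ i, sq_pos_of_ne_zero hi⟩
  rw [← sub_add_cancel x (Wᵀ *ᵥ y),
    sum_sq_add_of_dotProduct_eq_zero (dotProduct_transpose_mulVec_eq_zero hWz y)]
  linarith

theorem fromRows_mulVec_eq_fromRows_mulVec_iff [Semiring R] [Fintype p] (A₁ : Matrix m₁ n R)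
    (A₂ : Matrix m₂ n R) (B₁ : Matrix m₁ p R) (B₂ : Matrix m₂ p R) (x : n → R) (y : p → R) :
    fromRows A₁ A₂ *ᵥ x = fromRows B₁ B₂ *ᵥ y ↔ A₁ *ᵥ x = B₁ *ᵥ y ∧ A₂ *ᵥ x = B₂ *ᵥ y := by
  simp only [fromRows_mulVec, Sum.elim_eq_iff]

theorem of_const_one_mulVec [NonAssocSemiring R] (d : n → R) :
    (of fun (_ : m) (_ : n) => (1 : R)) *ᵥ d = fun _ => ∑ j, d j := by
  ext; simp [mulVec, dotProduct]

end

/-- Lemma `lemmaProjection`, full-row-rank case. With `W` the vertical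
stacking of `V₁, V₂` (both annihilating `e`), `W Wᵀ` invertible,
`S = {g : eᵀg = eᵀd, V₁ g = (1−λ)V₁ d, V₂ g = (1+λ)V₂ d}`, and
`A = (1/n)J + Wᵀ (W Wᵀ)⁻¹ U` with `U` the stacking of `(1−λ)V₁` and `(1+λ)V₂`, the vector
`A d` lies in `S` and is the unique point of `S` closest to `d̄ e` in Euclidean distance. -/
theorem projection_matrix (n s1 s2 : ℕ) (hn : 0 < n) (lam : ℝ)
    (d : Fin n → ℝ)
    (V1 : Matrix (Fin s1) (Fin n) ℝ) (V2 : Matrix (Fin s2) (Fin n) ℝ)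
    (hV1e : V1.mulVec (fun _ => 1) = 0) (hV2e : V2.mulVec (fun _ => 1) = 0)
    (W : Matrix (Fin s1 ⊕ Fin s2) (Fin n) ℝ) (hW : W = Matrix.fromRows V1 V2)
    (hWW : IsUnit (W * Wᵀ).det)
    (U : Matrix (Fin s1 ⊕ Fin s2) (Fin n) ℝ)
    (hU : U = Matrix.fromRows ((1 - lam) • V1) ((1 + lam) • V2))
    (S : Set (Fin n → ℝ))
    (hS : S = {g | (∑ i, g i = ∑ i, d i) ∧ V1.mulVec g = (1 - lam) • V1.mulVec d ∧
      V2.mulVec g = (1 + lam) • V2.mulVec d})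
    (A : Matrix (Fin n) (Fin n) ℝ)
    (hA : A = (n : ℝ)⁻¹ • (Matrix.of fun _ _ => (1 : ℝ)) + Wᵀ * (W * Wᵀ)⁻¹ * U) :
    A.mulVec d ∈ S ∧
    ∀ g ∈ S, g ≠ A.mulVec d →
      Real.sqrt (∑ i, (A.mulVec d i - (∑ j, d j) / n) ^ 2) <
        Real.sqrt (∑ i, (g i - (∑ j, d j) / n) ^ 2) := by
  set c := (∑ j, d j) / n
  set y := (W * Wᵀ)⁻¹ *ᵥ (U *ᵥ d)
  have hWe : W *ᵥ 1 = 0 := by rw [hW, fromRows_mulVec]; exact hV1e ▸ hV2e ▸ Sum.elim_zero_zero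
  have hAd : A *ᵥ d = c • 1 + Wᵀ *ᵥ y := by
    rw [hA, add_mulVec, smul_mulVec, of_const_one_mulVec]
    congr 1
    · ext; simp [c, div_eq_inv_mul]
    · simp only [y, mulVec_mulVec, Matrix.mul_assoc]
  have hWAd : W *ᵥ (A *ᵥ d) = U *ᵥ d := by
    rw [hAd, mulVec_add, mulVec_smul, hWe, smul_zero, zero_add,
      mulVec_transpose_mulVec_inv_mulVec hWW]
  have hsum : ∑ i, (A *ᵥ d) i = ∑ i, d i := by
    rw [← one_dotProduct, hAd, dotProduct_add, dotProduct_transpose_mulVec_eq_zero hWe y]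
    simp [c, Nat.cast_ne_zero.mpr hn.ne']
  have hmem (g : Fin n → ℝ) : g ∈ S ↔ ∑ i, g i = ∑ i, d i ∧ W *ᵥ g = U *ᵥ d := by
    rw [hS, hW, hU, fromRows_mulVec_eq_fromRows_mulVec_iff, smul_mulVec, smul_mulVec]
    rfl
  refine ⟨(hmem _).2 ⟨hsum, hWAd⟩, fun g hg hne => ?_⟩
  obtain ⟨-, hWg⟩ := (hmem g).1 hg
  have hWgc : W *ᵥ (g - c • 1) = W *ᵥ (Wᵀ *ᵥ y) := by
    rw [mulVec_sub, mulVec_smul, hWe, smul_zero, sub_zero, hWg,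
      mulVec_transpose_mulVec_inv_mulVec hWW]
  have hgc : g - c • 1 ≠ Wᵀ *ᵥ y := fun h => hne (by rw [hAd, ← h, add_sub_cancel])
  rw [hAd]
  apply Real.sqrt_lt_sqrt (by positivity)
  simpa using sum_sq_lt_sum_sq_of_mulVec_eq y hWgc hgc
end

section
/- Let n ≥ 2, λ ∈ ℝ, a ∈ ℝⁿ, and ε₀ > 0. Suppose that for every γ ∈ ℝⁿ with γ₁ = 0, γ ≥ 0 componentwise, and Σᵢ γᵢ = 1, and for every ε ∈ [0, ε₀], one has ⟨a, e₁ + εγ⟩ = 1 − λ(1 − (1+ε)/n). Then a = (1−λ)e₁ + (λ/n)e. -/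
open Matrix

section

variable {ι R : Type*} [Fintype ι] [DecidableEq ι]

theorem dotProduct_single_one_add_smul [CommSemiring R] (a γ : ι → R) (i₀ : ι) (ε : R) :
    a ⬝ᵥ (Pi.single i₀ 1 + ε • γ) = a i₀ + ε * a ⬝ᵥ γ := by
  rw [dotProduct_add, dotProduct_smul, dotProduct_single_one, smul_eq_mul]

theorem eq_smul_single_add_const_of_forall_dotProduct_eq [Field R] [LinearOrder R]
    [IsStrictOrderedRing R] [Nontrivial ι] {a : ι → R} {i₀ : ι}
    {c d ε₀ : R} (hε₀ : 0 < ε₀)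
    (h : ∀ γ : ι → R, γ i₀ = 0 → (∀ i, 0 ≤ γ i) → ∑ i, γ i = 1 →
      ∀ ε ∈ Set.Icc 0 ε₀, a ⬝ᵥ (Pi.single i₀ 1 + ε • γ) = c + ε * d) :
    a = (c - d) • Pi.single i₀ 1 + d • fun _ => 1 := by
  have h_vertex : ∀ j ≠ i₀, ∀ ε ∈ Set.Icc 0 ε₀, a i₀ + ε * a j = c + ε * d := by
    intro j hj ε hε
    have := h (Pi.single j 1) (Pi.single_eq_of_ne hj.symm 1)
      (Pi.single_nonneg.mpr zero_le_one) (by simp) ε hε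
    rwa [dotProduct_single_one_add_smul, dotProduct_single_one] at this
  obtain ⟨j₁, hj₁⟩ := exists_ne i₀
  have h_base : a i₀ = c := by
    simpa using h_vertex j₁ hj₁ 0 ⟨le_rfl, hε₀.le⟩
  have h_off : ∀ j ≠ i₀, a j = d := fun j hj => by
    have := h_vertex j hj ε₀ ⟨hε₀.le, le_rfl⟩
    rw [h_base, add_right_inj] at this
    exact mul_left_cancel₀ hε₀.ne' this
  ext i
  rcases eq_or_ne i i₀ with rfl | hi
  · simp [h_base]
  · simp [h_off i hi, hi]

end

/-- core of Lemma `firstColumnA`. If `⟨a, e₁ + εγ⟩ = 1 − λ(1 − (1+ε)/n)` for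
every admissible profile `γ` (with `γ₁ = 0`, `γ ≥ 0`, `Σ γᵢ = 1`) and every `ε ∈ [0, ε₀]`,
then `a = (1−λ) e₁ + (λ/n) e`. -/
theorem first_row_identification (n : ℕ) (hn : 2 ≤ n) (lam : ℝ) (a : Fin n → ℝ)
    (ε₀ : ℝ) (hε₀ : 0 < ε₀)
    (h : ∀ γ : Fin n → ℝ, γ ⟨0, by omega⟩ = 0 → (∀ i, 0 ≤ γ i) → (∑ i, γ i = 1) →
      ∀ ε ∈ Set.Icc (0 : ℝ) ε₀,
        ∑ i, a i * ((Pi.single (⟨0, by omega⟩ : Fin n) 1 : Fin n → ℝ) + ε • γ) i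
          = 1 - lam * (1 - (1 + ε) / n)) :
    a = (1 - lam) • (Pi.single (⟨0, by omega⟩ : Fin n) 1 : Fin n → ℝ)
        + (lam / n) • (fun _ => (1 : ℝ)) := by
  have : Nontrivial (Fin n) := Fin.nontrivial_iff_two_le.mpr hn
  have h_affine : ∀ ε : ℝ, 1 - lam * (1 - (1 + ε) / n) = (1 - lam + lam / n) + ε * (lam / n) :=
    fun ε => by ring
  have := eq_smul_single_add_const_of_forall_dotProduct_eq hε₀ fun γ h0 hγ hsum ε hε =>
    (h γ h0 hγ hsum ε hε).trans (h_affine ε)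
  rwa [add_sub_cancel_right] at this
end

section
/- Let n, m ≥ 1 and λ ∈ (0,1). Let C, V ∈ ℝ^{m×n} satisfy Ve = 0 and VᵀC = Iₙ − (1/n)J. Let d ∈ ℝⁿ with d ≥ 0, C·d ≥ 0, and V·d ≥ 0 componentwise, and set d̄ := (1/n) Σᵢ dᵢ. Then g* := (1−λ)d + λ d̄ e belongs to F(d) := {g ∈ ℝⁿ : g ≥ 0, eᵀg = eᵀd, and (1−λ)Vd ≤ Vg ≤ (1+λ)Vd componentwise}, and g* is the unique minimizer of g ↦ ½‖g‖₂² over F(d). -/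
/-!
Since `Ve = 0`, the point `g* = (1-λ)d + λ d̄ e` has `Vg* = (1-λ)Vd`, and it has the same total
as `d`; so it is feasible. For a feasible `g` put `h = g - g*`: then `∑ h = 0` and `Vh ≥ 0`. As
`VᵀC = I - J/n` fixes sum-zero vectors, `⟪g*, h⟫ = (1-λ)⟪d, h⟫ = (1-λ)⟪Cd, Vh⟫ ≥ 0`, and therefore
`‖g‖² = ‖g*‖² + 2⟪g*, h⟫ + ‖h‖² > ‖g*‖²` unless `h = 0`.
-/

open Matrix

/-- The DC-OPF feasible set under the orientation with `Vd ≥ 0`: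
`{g : g ≥ 0, eᵀg = eᵀd, (1−λ)Vd ≤ Vg ≤ (1+λ)Vd}`. -/
def dcopfFeasible (n m : ℕ) (lam : ℝ) (V : Matrix (Fin m) (Fin n) ℝ) (d : Fin n → ℝ) :
    Set (Fin n → ℝ) :=
  {g | (∀ i, 0 ≤ g i) ∧ (∑ i, g i = ∑ i, d i) ∧
    ∀ e, (1 - lam) * V.mulVec d e ≤ V.mulVec g e ∧ V.mulVec g e ≤ (1 + lam) * V.mulVec d e}

open Finset

theorem sum_sq_lt_sum_sq_of_dotProduct_sub_nonneg {ι : Type*} [Fintype ι] {x y : ι → ℝ}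
    (hxy : 0 ≤ x ⬝ᵥ (y - x)) (hne : y ≠ x) : ∑ i, x i ^ 2 < ∑ i, y i ^ 2 := by
  obtain ⟨j, hj⟩ := Function.ne_iff.mp hne
  have hpos : 0 < ∑ i, (y - x) i ^ 2 :=
    sum_pos' (fun i _ => sq_nonneg _) ⟨j, mem_univ j, sq_pos_of_ne_zero (sub_ne_zero.mpr hj)⟩
  have hexpand : ∑ i, y i ^ 2 = ∑ i, x i ^ 2 + 2 * (x ⬝ᵥ (y - x)) + ∑ i, (y - x) i ^ 2 := by
    simp only [dotProduct, mul_sum, ← sum_add_distrib, Pi.sub_apply]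
    exact sum_congr rfl fun i _ => by ring
  linarith

theorem mulVec_dotProduct_mulVec {ι κ R : Type*} [Fintype ι] [Fintype κ] [CommSemiring R]
    (C V : Matrix κ ι R) (d h : ι → R) : (C *ᵥ d) ⬝ᵥ (V *ᵥ h) = ((Vᵀ * C) *ᵥ d) ⬝ᵥ h := by
  rw [dotProduct_mulVec, ← mulVec_transpose, mulVec_mulVec]

theorem centering_mulVec_dotProduct_of_sum_eq_zero {ι R : Type*} [Fintype ι] [DecidableEq ι]
    [CommRing R] (c : R) (d : ι → R) {h : ι → R} (hh : ∑ i, h i = 0) :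
    ((1 - c • of fun _ _ => (1 : R)) *ᵥ d) ⬝ᵥ h = d ⬝ᵥ h := by
  have hJ : (of fun _ _ => (1 : R)) *ᵥ d ⬝ᵥ h = 0 := by
    simp [dotProduct, mulVec, ← mul_sum, hh]
  rw [sub_mulVec, one_mulVec, smul_mulVec, sub_dotProduct, smul_dotProduct, hJ, smul_zero,
    sub_zero]

section OptimalGeneration

variable {ι : Type*} [Fintype ι] (lam : ℝ) (d : ι → ℝ)

noncomputable def optimalGeneration : ι → ℝ :=
  (1 - lam) • d + (lam * ((∑ i, d i) / Fintype.card ι)) • fun _ => 1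

theorem optimalGeneration_apply (i : ι) :
    optimalGeneration lam d i = (1 - lam) * d i + lam * ((∑ j, d j) / Fintype.card ι) := by
  simp [optimalGeneration]

theorem sum_optimalGeneration : ∑ i, optimalGeneration lam d i = ∑ i, d i := by
  simp only [optimalGeneration_apply, sum_add_distrib, ← mul_sum, sum_const, card_univ,
    nsmul_eq_mul, ← Fintype.expect_eq_sum_div_card, Fintype.card_mul_expect]
  ring

theorem optimalGeneration_nonneg {lam : ℝ} (hlam : lam ∈ Set.Icc 0 1) {d : ι → ℝ}
    (hd : ∀ i, 0 ≤ d i) (i : ι) : 0 ≤ optimalGeneration lam d i := by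
  rw [optimalGeneration_apply]
  exact add_nonneg (mul_nonneg (sub_nonneg.mpr hlam.2) (hd i))
    (mul_nonneg hlam.1 (div_nonneg (sum_nonneg fun j _ => hd j) (Nat.cast_nonneg _)))

theorem mulVec_optimalGeneration {κ : Type*} {V : Matrix κ ι ℝ} (hVe : V *ᵥ (fun _ => 1) = 0) :
    V *ᵥ optimalGeneration lam d = (1 - lam) • V *ᵥ d := by
  rw [optimalGeneration, mulVec_add, mulVec_smul, mulVec_smul, hVe, smul_zero, add_zero]

end OptimalGeneration

theorem optimalGeneration_dotProduct_sub_nonneg {ι κ : Type*} [Fintype ι] [DecidableEq ι]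
    [Fintype κ] {lam c : ℝ} (hlam : lam ≤ 1) {C V : Matrix κ ι ℝ}
    (hVe : V *ᵥ (fun _ => 1) = 0) (hVC : Vᵀ * C = 1 - c • of fun _ _ => 1)
    {d g : ι → ℝ} (hCd : ∀ e, 0 ≤ (C *ᵥ d) e) (hsum : ∑ i, g i = ∑ i, d i)
    (hflow : ∀ e, (1 - lam) * (V *ᵥ d) e ≤ (V *ᵥ g) e) :
    0 ≤ optimalGeneration lam d ⬝ᵥ (g - optimalGeneration lam d) := by
  set h := g - optimalGeneration lam d
  have hh : ∑ i, h i = 0 := by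
    simp only [h, Pi.sub_apply, sum_sub_distrib, hsum, sum_optimalGeneration, sub_self]
  have hVh : ∀ e, 0 ≤ (V *ᵥ h) e := fun e => by
    simp only [h, mulVec_sub, mulVec_optimalGeneration lam d hVe, Pi.sub_apply, Pi.smul_apply,
      smul_eq_mul, sub_nonneg, hflow e]
  have hdh : d ⬝ᵥ h = (C *ᵥ d) ⬝ᵥ (V *ᵥ h) := by
    rw [mulVec_dotProduct_mulVec, hVC, centering_mulVec_dotProduct_of_sum_eq_zero c d hh]
  have hconst : (fun _ => (1 : ℝ)) ⬝ᵥ h = 0 := (one_dotProduct h).trans hh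
  rw [optimalGeneration, add_dotProduct, smul_dotProduct, smul_dotProduct, hconst, smul_zero,
    add_zero, hdh, smul_eq_mul]
  exact mul_nonneg (by linarith) (sum_nonneg fun e _ => mul_nonneg (hCd e) (hVh e))

theorem optimalGeneration_mem_dcopfFeasible {n m : ℕ} {lam : ℝ} (hlam : lam ∈ Set.Icc 0 1)
    {V : Matrix (Fin m) (Fin n) ℝ} (hVe : V *ᵥ (fun _ => 1) = 0) {d : Fin n → ℝ}
    (hd : ∀ i, 0 ≤ d i) (hVd : ∀ e, 0 ≤ (V *ᵥ d) e) :
    optimalGeneration lam d ∈ dcopfFeasible n m lam V d := by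
  refine ⟨optimalGeneration_nonneg hlam hd, sum_optimalGeneration lam d, fun e => ?_⟩
  rw [mulVec_optimalGeneration lam d hVe, Pi.smul_apply, smul_eq_mul]
  exact ⟨le_rfl, by nlinarith [hlam.1, hVd e]⟩

theorem closed_form_optimum_general (n m : ℕ)
    (lam : ℝ) (hlam : lam ∈ Set.Ioo (0 : ℝ) 1)
    (C V : Matrix (Fin m) (Fin n) ℝ)
    (hVe : V.mulVec (fun _ => 1) = 0)
    (hVC : Vᵀ * C = 1 - (n : ℝ)⁻¹ • (Matrix.of fun _ _ => (1 : ℝ)))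
    (d : Fin n → ℝ) (hd : ∀ i, 0 ≤ d i)
    (hCd : ∀ i, 0 ≤ C.mulVec d i) (hVd : ∀ i, 0 ≤ V.mulVec d i) :
    ((1 - lam) • d + (lam * ((∑ i, d i) / n)) • (fun _ => (1 : ℝ)))
      ∈ dcopfFeasible n m lam V d ∧
    ∀ g ∈ dcopfFeasible n m lam V d,
      g ≠ ((1 - lam) • d + (lam * ((∑ i, d i) / n)) • (fun _ => (1 : ℝ))) →
      (1 / 2 : ℝ) * ∑ i, (((1 - lam) • d
          + (lam * ((∑ j, d j) / n)) • (fun _ => (1 : ℝ)) : Fin n → ℝ) i) ^ 2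
        < (1 / 2 : ℝ) * ∑ i, g i ^ 2 := by
  have hgen : optimalGeneration lam d =
      (1 - lam) • d + (lam * ((∑ i, d i) / n)) • fun _ => 1 := by
    rw [optimalGeneration, Fintype.card_fin]
  rw [← hgen]
  refine ⟨optimalGeneration_mem_dcopfFeasible (Set.Ioo_subset_Icc_self hlam) hVe hd hVd,
    fun g ⟨_, hsum, hflow⟩ hne => ?_⟩
  have hinner := optimalGeneration_dotProduct_sub_nonneg hlam.2.le hVe hVC hCd hsum
    fun e => (hflow e).1
  linarith [sum_sq_lt_sum_sq_of_dotProduct_sub_nonneg hinner hne]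

/-- Lemma `solutionCd`. If `Cd ≥ 0` (and `Vd ≥ 0`, `d ≥ 0`), then
`g* = (1−λ)d + λ d̄ e` is feasible and is the unique minimizer of `½‖g‖²` over the DC-OPF
feasible set. -/
theorem closed_form_optimum (n m : ℕ) (hn : 0 < n) (hm : 0 < m)
    (lam : ℝ) (hlam : lam ∈ Set.Ioo (0 : ℝ) 1)
    (C V : Matrix (Fin m) (Fin n) ℝ)
    (hVe : V.mulVec (fun _ => 1) = 0)
    (hVC : Vᵀ * C = 1 - (n : ℝ)⁻¹ • (Matrix.of fun _ _ => (1 : ℝ)))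
    (d : Fin n → ℝ) (hd : ∀ i, 0 ≤ d i)
    (hCd : ∀ i, 0 ≤ C.mulVec d i) (hVd : ∀ i, 0 ≤ V.mulVec d i) :
    ((1 - lam) • d + (lam * ((∑ i, d i) / n)) • (fun _ => (1 : ℝ)))
      ∈ dcopfFeasible n m lam V d ∧
    ∀ g ∈ dcopfFeasible n m lam V d,
      g ≠ ((1 - lam) • d + (lam * ((∑ i, d i) / n)) • (fun _ => (1 : ℝ))) →
      (1 / 2 : ℝ) * ∑ i, (((1 - lam) • d
          + (lam * ((∑ j, d j) / n)) • (fun _ => (1 : ℝ)) : Fin n → ℝ) i) ^ 2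
        < (1 / 2 : ℝ) * ∑ i, g i ^ 2 :=
  closed_form_optimum_general n m lam hlam C V hVe hVC d hd hCd hVd
end

section
/- Let n ≥ 1, let u, w, u′, w′, γ ∈ ℝⁿ, B ∈ ℝ^{n×n}, and λ* > 0, and define the n×n matrix Q := u (w′)ᵀ − w (u′)ᵀ (difference of outer products, with u(w′)ᵀ having entries uᵢ w′ⱼ). For ε ≥ 0 put d(ε) := e₁ + εγ. Assume there is ε₁ > 0 such that for all ε ∈ [0, ε₁]: ⟨u, d(ε)⟩ > 0, ⟨w, d(ε)⟩ > 0, ⟨u′, B d(ε)⟩ ≥ 0, and ⟨w′, B d(ε)⟩ ≥ 0. Then the following are equivalent: (I) there exists ε₀ ∈ (0, ε₁] such that |⟨u′, B d(ε)⟩| / (λ* ⟨u, d(ε)⟩) = |⟨w′, B d(ε)⟩| / (λ* ⟨w, d(ε)⟩) for every ε ∈ [0, ε₀]; (II) e₁ᵀ Q B e₁ = 0, e₁ᵀ (QB + Bᵀ Qᵀ) γ = 0, and γᵀ Q B γ = 0. -/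
/-!
Because both flows are nonnegative and both denominators positive, the two exceedances agree
at a demand `d` iff `(u ⬝ᵥ d) (w' ⬝ᵥ B d) - (w ⬝ᵥ d) (u' ⬝ᵥ B d) = dᵀ Q B d` vanishes.
Along `d = e₁ + ε γ` this is a quadratic polynomial in `ε` whose coefficients are the three
quantities of (II), and a quadratic vanishing on a nondegenerate interval is zero.
-/

open Matrix

namespace Matrix

variable {R m n : Type*} [Fintype m] [Fintype n]

theorem dotProduct_vecMulVec_mulVec [CommSemiring R] (x a : m → R) (b z : n → R) :
    x ⬝ᵥ vecMulVec a b *ᵥ z = (x ⬝ᵥ a) * (b ⬝ᵥ z) := by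
  rw [vecMulVec_mulVec, op_smul_eq_smul, dotProduct_smul, smul_eq_mul, mul_comm]

theorem dotProduct_sub_vecMulVec_mul_mulVec [CommRing R] (u w : m → R) (u' w' : n → R)
    (B : Matrix n n R) (x : m → R) (y : n → R) :
    x ⬝ᵥ ((vecMulVec u w' - vecMulVec w u') * B) *ᵥ y
      = (u ⬝ᵥ x) * (w' ⬝ᵥ B *ᵥ y) - (w ⬝ᵥ x) * (u' ⬝ᵥ B *ᵥ y) := by
  rw [← mulVec_mulVec, sub_mulVec, dotProduct_sub, dotProduct_vecMulVec_mulVec,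
    dotProduct_vecMulVec_mulVec, dotProduct_comm x u, dotProduct_comm x w]

theorem dotProduct_mulVec_add_smul [CommSemiring R] (M : Matrix m m R) (e γ : m → R) (t : R) :
    (e + t • γ) ⬝ᵥ M *ᵥ (e + t • γ)
      = e ⬝ᵥ M *ᵥ e + (e ⬝ᵥ (M + Mᵀ) *ᵥ γ) * t + (γ ⬝ᵥ M *ᵥ γ) * t ^ 2 := by
  have hT : e ⬝ᵥ Mᵀ *ᵥ γ = γ ⬝ᵥ M *ᵥ e := by
    rw [dotProduct_mulVec, vecMul_transpose, dotProduct_comm]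
  simp only [mulVec_add, mulVec_smul, add_dotProduct, dotProduct_add, smul_dotProduct,
    dotProduct_smul, add_mulVec, hT, smul_eq_mul]
  ring

end Matrix

section

variable {K : Type*} [Field K] [LinearOrder K] [IsStrictOrderedRing K]

theorem quadratic_eq_zero_on_Icc_iff {a b c ε₀ : K} (hε₀ : 0 < ε₀) :
    (∀ ε ∈ Set.Icc 0 ε₀, a + b * ε + c * ε ^ 2 = 0) ↔ a = 0 ∧ b = 0 ∧ c = 0 := by
  refine ⟨fun h => ?_, fun ⟨ha, hb, hc⟩ ε _ => by simp [ha, hb, hc]⟩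
  have h0 := h 0 ⟨le_rfl, hε₀.le⟩
  have h1 := h ε₀ ⟨hε₀.le, le_rfl⟩
  have h2 := h (ε₀ / 2) ⟨by positivity, by linarith⟩
  have ha : a = 0 := by simpa using h0
  -- the values at `ε₀` and `ε₀ / 2` separate the linear and quadratic coefficients
  have hc : c * ε₀ ^ 2 = 0 := by linear_combination 2 * h1 - 4 * h2 + 2 * ha
  have hb : b * ε₀ = 0 := by linear_combination h1 - hc - ha
  exact ⟨ha, (mul_eq_zero.1 hb).resolve_right hε₀.ne',
    (mul_eq_zero.1 hc).resolve_right (pow_ne_zero 2 hε₀.ne')⟩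

theorem abs_div_mul_eq_abs_div_mul_iff {l p q a b : K} (hl : l ≠ 0) (hp : p ≠ 0) (hq : q ≠ 0)
    (ha : 0 ≤ a) (hb : 0 ≤ b) :
    |a| / (l * p) = |b| / (l * q) ↔ p * b - q * a = 0 := by
  rw [abs_of_nonneg ha, abs_of_nonneg hb, div_eq_div_iff (mul_ne_zero hl hp) (mul_ne_zero hl hq),
    sub_eq_zero, mul_comm l p, mul_comm l q, ← mul_assoc, ← mul_assoc, mul_left_inj' hl]
  constructor <;> intro h <;> linear_combination -h

end

/-- Lemma `conditions`. With `Q = u(w′)ᵀ − w(u′)ᵀ`, `d(ε) = e₁ + εγ`, and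
positivity/nonnegativity of the relevant flows on `[0, ε₁]`, the two relative exceedances
`|⟨u′, B d(ε)⟩|/(λ* ⟨u, d(ε)⟩)` and `|⟨w′, B d(ε)⟩|/(λ* ⟨w, d(ε)⟩)` agree on a right
neighborhood of `0` iff `e₁ᵀQBe₁ = 0`, `e₁ᵀ(QB + BᵀQᵀ)γ = 0`, and `γᵀQBγ = 0`. -/
theorem equal_exceedance_conditions (n : ℕ) (hn : 0 < n)
    (u w u' w' γ : Fin n → ℝ) (B : Matrix (Fin n) (Fin n) ℝ)
    (lams : ℝ) (hlams : 0 < lams)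
    (Q : Matrix (Fin n) (Fin n) ℝ)
    (hQ : Q = Matrix.of fun i j => u i * w' j - w i * u' j)
    (ε₁ : ℝ) (hε₁ : 0 < ε₁)
    (hpos : ∀ ε ∈ Set.Icc (0 : ℝ) ε₁,
      0 < u ⬝ᵥ ((Pi.single (⟨0, hn⟩ : Fin n) 1 : Fin n → ℝ) + ε • γ) ∧
      0 < w ⬝ᵥ ((Pi.single (⟨0, hn⟩ : Fin n) 1 : Fin n → ℝ) + ε • γ) ∧
      0 ≤ u' ⬝ᵥ B.mulVec ((Pi.single (⟨0, hn⟩ : Fin n) 1 : Fin n → ℝ) + ε • γ) ∧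
      0 ≤ w' ⬝ᵥ B.mulVec ((Pi.single (⟨0, hn⟩ : Fin n) 1 : Fin n → ℝ) + ε • γ)) :
    (∃ ε₀ ∈ Set.Ioc (0 : ℝ) ε₁, ∀ ε ∈ Set.Icc (0 : ℝ) ε₀,
        |u' ⬝ᵥ B.mulVec ((Pi.single (⟨0, hn⟩ : Fin n) 1 : Fin n → ℝ) + ε • γ)| /
            (lams * (u ⬝ᵥ ((Pi.single (⟨0, hn⟩ : Fin n) 1 : Fin n → ℝ) + ε • γ)))
          = |w' ⬝ᵥ B.mulVec ((Pi.single (⟨0, hn⟩ : Fin n) 1 : Fin n → ℝ) + ε • γ)| /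
            (lams * (w ⬝ᵥ ((Pi.single (⟨0, hn⟩ : Fin n) 1 : Fin n → ℝ) + ε • γ)))) ↔
    ((Pi.single (⟨0, hn⟩ : Fin n) 1 : Fin n → ℝ) ⬝ᵥ
        (Q * B).mulVec (Pi.single (⟨0, hn⟩ : Fin n) 1) = 0 ∧
      (Pi.single (⟨0, hn⟩ : Fin n) 1 : Fin n → ℝ) ⬝ᵥ (Q * B + Bᵀ * Qᵀ).mulVec γ = 0 ∧
      γ ⬝ᵥ (Q * B).mulVec γ = 0) := by
  set e : Fin n → ℝ := Pi.single (⟨0, hn⟩ : Fin n) 1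
  have hQ' : Q = vecMulVec u w' - vecMulVec w u' := hQ
  have hratio : ∀ ε ∈ Set.Icc (0 : ℝ) ε₁,
      |u' ⬝ᵥ B *ᵥ (e + ε • γ)| / (lams * (u ⬝ᵥ (e + ε • γ)))
          = |w' ⬝ᵥ B *ᵥ (e + ε • γ)| / (lams * (w ⬝ᵥ (e + ε • γ))) ↔
        e ⬝ᵥ (Q * B) *ᵥ e + (e ⬝ᵥ (Q * B + Bᵀ * Qᵀ) *ᵥ γ) * ε + (γ ⬝ᵥ (Q * B) *ᵥ γ) * ε ^ 2
          = 0 := by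
    intro ε hε
    obtain ⟨hu, hw, hu', hw'⟩ := hpos ε hε
    rw [abs_div_mul_eq_abs_div_mul_iff hlams.ne' hu.ne' hw.ne' hu' hw', ← transpose_mul,
      ← dotProduct_mulVec_add_smul, hQ', dotProduct_sub_vecMulVec_mul_mulVec]
  refine (exists_congr fun ε₀ => and_congr_right fun hε₀ => forall₂_congr fun ε hε =>
    hratio ε ⟨hε.1, hε.2.trans hε₀.2⟩).trans ⟨fun ⟨_, hε₀, h⟩ => ?_, fun h => ?_⟩
  · exact (quadratic_eq_zero_on_Icc_iff hε₀.1).1 h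
  · exact ⟨ε₁, ⟨hε₁, le_rfl⟩, (quadratic_eq_zero_on_Icc_iff hε₁).2 h⟩
end

section
/- Let n ≥ 1, let u, w, u′, w′, γ ∈ ℝⁿ, B ∈ ℝ^{n×n}, and λ* > 0, and define Q := u (w′)ᵀ − w (u′)ᵀ (difference of outer products). For ε ≥ 0 put d(ε) := e₁ + εγ, and assume there is ε₁ > 0 such that ⟨u, d(ε)⟩ > 0 and ⟨w, d(ε)⟩ > 0 for all ε ∈ [0, ε₁]. If the matrix Q·B is skew-symmetric, i.e. (QB)ᵀ = −QB, then for every ε ∈ [0, ε₁], |⟨u′, B d(ε)⟩| / (λ* ⟨u, d(ε)⟩) = |⟨w′, B d(ε)⟩| / (λ* ⟨w, d(ε)⟩). -/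
/-!
The flow identity behind the theorem is `d ⬝ᵥ (Q * B) *ᵥ d = 0`, valid because `Q * B` is
skew-symmetric. Expanding `Q = u w'ᵀ - w u'ᵀ` turns it into
`⟨u, d⟩ ⟨w', B d⟩ = ⟨w, d⟩ ⟨u', B d⟩`, and taking absolute values with `⟨u, d⟩, ⟨w, d⟩ > 0`
gives the equality of the two ratios.
-/

open Matrix

namespace Matrix

variable {ι R : Type*} [Fintype ι]

theorem dotProduct_mulVec_self_eq_zero_of_transpose_eq_neg [CommRing R] [IsAddTorsionFree R]
    {A : Matrix ι ι R} (hA : Aᵀ = -A) (x : ι → R) : x ⬝ᵥ A *ᵥ x = 0 := by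
  rw [← self_eq_neg]
  calc x ⬝ᵥ A *ᵥ x = x ⬝ᵥ Aᵀ *ᵥ x := by
        rw [mulVec_transpose, dotProduct_mulVec, dotProduct_comm]
    _ = -(x ⬝ᵥ A *ᵥ x) := by rw [hA, neg_mulVec, dotProduct_neg]

theorem dotProduct_vecMulVec_mulVec_s9 [CommSemiring R] (u v x y : ι → R) :
    x ⬝ᵥ vecMulVec u v *ᵥ y = (u ⬝ᵥ x) * (v ⬝ᵥ y) := by
  rw [vecMulVec_mulVec, dotProduct_comm]
  simp [smul_dotProduct, mul_comm]

end Matrix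

theorem abs_div_eq_abs_div_of_mul_eq {K : Type*} [Field K] [LinearOrder K] [IsStrictOrderedRing K]
    {a b p q : K} (hp : 0 < p) (hq : 0 < q) (h : p * b = q * a) : |a| / p = |b| / q := by
  have habs := congrArg abs h
  rw [abs_mul, abs_mul, abs_of_pos hp, abs_of_pos hq] at habs
  rw [div_eq_div_iff hp.ne' hq.ne']
  linear_combination -habs

theorem skew_symmetric_equal_exceedance_general (n : ℕ) (hn : 0 < n)
    (u w u' w' γ : Fin n → ℝ) (B : Matrix (Fin n) (Fin n) ℝ)
    (lams : ℝ)
    (Q : Matrix (Fin n) (Fin n) ℝ)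
    (hQ : Q = Matrix.of fun i j => u i * w' j - w i * u' j)
    (ε₁ : ℝ)
    (hpos : ∀ ε ∈ Set.Icc (0 : ℝ) ε₁,
      0 < u ⬝ᵥ ((Pi.single (⟨0, hn⟩ : Fin n) 1 : Fin n → ℝ) + ε • γ) ∧
      0 < w ⬝ᵥ ((Pi.single (⟨0, hn⟩ : Fin n) 1 : Fin n → ℝ) + ε • γ))
    (hskew : (Q * B)ᵀ = -(Q * B)) :
    ∀ ε ∈ Set.Icc (0 : ℝ) ε₁,
      |u' ⬝ᵥ B.mulVec ((Pi.single (⟨0, hn⟩ : Fin n) 1 : Fin n → ℝ) + ε • γ)| /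
          (lams * (u ⬝ᵥ ((Pi.single (⟨0, hn⟩ : Fin n) 1 : Fin n → ℝ) + ε • γ)))
        = |w' ⬝ᵥ B.mulVec ((Pi.single (⟨0, hn⟩ : Fin n) 1 : Fin n → ℝ) + ε • γ)| /
          (lams * (w ⬝ᵥ ((Pi.single (⟨0, hn⟩ : Fin n) 1 : Fin n → ℝ) + ε • γ))) := by
  intro ε hε
  set d : Fin n → ℝ := Pi.single (⟨0, hn⟩ : Fin n) 1 + ε • γ
  obtain ⟨hu, hw⟩ := hpos ε hε
  have hQ_outer : Q = vecMulVec u w' - vecMulVec w u' := by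
    rw [hQ]
    ext i j
    simp [vecMulVec_apply]
  have hflows : (u ⬝ᵥ d) * (w' ⬝ᵥ B *ᵥ d) = (w ⬝ᵥ d) * (u' ⬝ᵥ B *ᵥ d) := by
    have hzero := dotProduct_mulVec_self_eq_zero_of_transpose_eq_neg hskew d
    rwa [← mulVec_mulVec, hQ_outer, sub_mulVec, dotProduct_sub, dotProduct_vecMulVec_mulVec_s9,
      dotProduct_vecMulVec_mulVec_s9, sub_eq_zero] at hzero
  simp only [mul_comm lams, div_mul_eq_div_div]
  rw [abs_div_eq_abs_div_of_mul_eq hu hw hflows]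

/-- Corollary `skew-symmetricCond`. With `Q = u(w′)ᵀ − w(u′)ᵀ` and
`d(ε) = e₁ + εγ`, if `⟨u, d(ε)⟩ > 0` and `⟨w, d(ε)⟩ > 0` on `[0, ε₁]` and `QB` is
skew-symmetric, then the relative exceedances
`|⟨u′, B d(ε)⟩|/(λ* ⟨u, d(ε)⟩)` and `|⟨w′, B d(ε)⟩|/(λ* ⟨w, d(ε)⟩)` agree on `[0, ε₁]`. -/
theorem skew_symmetric_equal_exceedance (n : ℕ) (hn : 0 < n)
    (u w u' w' γ : Fin n → ℝ) (B : Matrix (Fin n) (Fin n) ℝ)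
    (lams : ℝ) (hlams : 0 < lams)
    (Q : Matrix (Fin n) (Fin n) ℝ)
    (hQ : Q = Matrix.of fun i j => u i * w' j - w i * u' j)
    (ε₁ : ℝ) (hε₁ : 0 < ε₁)
    (hpos : ∀ ε ∈ Set.Icc (0 : ℝ) ε₁,
      0 < u ⬝ᵥ ((Pi.single (⟨0, hn⟩ : Fin n) 1 : Fin n → ℝ) + ε • γ) ∧
      0 < w ⬝ᵥ ((Pi.single (⟨0, hn⟩ : Fin n) 1 : Fin n → ℝ) + ε • γ))
    (hskew : (Q * B)ᵀ = -(Q * B)) :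
    ∀ ε ∈ Set.Icc (0 : ℝ) ε₁,
      |u' ⬝ᵥ B.mulVec ((Pi.single (⟨0, hn⟩ : Fin n) 1 : Fin n → ℝ) + ε • γ)| /
          (lams * (u ⬝ᵥ ((Pi.single (⟨0, hn⟩ : Fin n) 1 : Fin n → ℝ) + ε • γ)))
        = |w' ⬝ᵥ B.mulVec ((Pi.single (⟨0, hn⟩ : Fin n) 1 : Fin n → ℝ) + ε • γ)| /
          (lams * (w ⬝ᵥ ((Pi.single (⟨0, hn⟩ : Fin n) 1 : Fin n → ℝ) + ε • γ))) :=
  skew_symmetric_equal_exceedance_general n hn u w u' w' γ B lams Q hQ ε₁ hpos hskew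
end

section
/- Let n ≥ 1 and let X₁, …, Xₙ be independent, identically distributed, nonnegative real random variables. Let ε ∈ (0,1) and x ≥ 0, and set M := max{X₁, …, Xₙ}. Then P( M > x and (Σᵢ₌₁ⁿ Xᵢ) − M ≤ ε·M ) = n · P( X₁ > x and Σⱼ₌₂ⁿ Xⱼ ≤ ε·X₁ ). -/
open MeasureTheory ProbabilityTheory Finset

/-!
For `ε < 1`, nonnegative `f` and `x ≥ 0`, the event "`max f > x` and the other coordinates sum to
at most `ε · max f`" is the disjoint union over `i` of the events "`f i > x` and the coordinates
other than `i` sum to at most `ε · f i`": on the `i`-th of these, every other coordinate is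
`≤ ε · f i < f i`, so `i` is the unique maximiser. Exchangeability of an i.i.d. vector gives all
`n` pieces the probability of the first one.
-/

section BigJump

variable {ι : Type*} [Fintype ι] [DecidableEq ι] {x ε : ℝ} {f : ι → ℝ} {i j : ι}

def bigJumpSet (x ε : ℝ) (i : ι) : Set (ι → ℝ) :=
  {f | x < f i ∧ ∑ j ∈ univ.erase i, f j ≤ ε * f i}

lemma measurableSet_bigJumpSet (x ε : ℝ) (i : ι) : MeasurableSet (bigJumpSet x ε i) :=
  (measurableSet_lt measurable_const (measurable_pi_apply i)).inter
    (measurableSet_le (Finset.measurable_sum _ fun j _ ↦ measurable_pi_apply j)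
      (measurable_const.mul (measurable_pi_apply i)))

lemma comp_equiv_mem_bigJumpSet_iff (e : ι ≃ ι) :
    f ∘ e ∈ bigJumpSet x ε i ↔ f ∈ bigJumpSet x ε (e i) := by
  have hsum : ∑ j ∈ univ.erase i, f (e j) = ∑ k ∈ univ.erase (e i), f k := by
    rw [sum_erase_eq_sub (mem_univ i), sum_erase_eq_sub (mem_univ (e i)), e.sum_comp f]
  simp only [bigJumpSet, Set.mem_ofPred_eq, Function.comp_apply, hsum]

lemma lt_of_mem_bigJumpSet (hf : 0 ≤ f) (hx : 0 ≤ x) (hε : ε < 1)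
    (hi : f ∈ bigJumpSet x ε i) (hj : j ≠ i) : f j < f i :=
  calc f j ≤ ∑ k ∈ univ.erase i, f k :=
        single_le_sum (fun k _ ↦ hf k) (mem_erase.2 ⟨hj, mem_univ j⟩)
    _ ≤ ε * f i := hi.2
    _ < f i := mul_lt_of_lt_one_left (hx.trans_lt hi.1) hε

lemma eq_of_mem_bigJumpSet (hf : 0 ≤ f) (hx : 0 ≤ x) (hε : ε < 1)
    (hi : f ∈ bigJumpSet x ε i) (hj : f ∈ bigJumpSet x ε j) : i = j := by
  by_contra hij
  exact lt_asymm (lt_of_mem_bigJumpSet hf hx hε hi (Ne.symm hij))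
    (lt_of_mem_bigJumpSet hf hx hε hj hij)

lemma sup'_eq_of_mem_bigJumpSet (hf : 0 ≤ f) (hx : 0 ≤ x) (hε : ε < 1)
    (h : (univ : Finset ι).Nonempty) (hi : f ∈ bigJumpSet x ε i) : univ.sup' h f = f i := by
  refine le_antisymm (sup'_le _ _ fun j _ ↦ ?_) (le_sup' f (mem_univ i))
  rcases eq_or_ne j i with rfl | hji
  · exact le_rfl
  · exact (lt_of_mem_bigJumpSet hf hx hε hi hji).le

lemma lt_sup'_and_sum_sub_sup'_le_iff (hf : 0 ≤ f) (hx : 0 ≤ x) (hε : ε < 1)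
    (h : (univ : Finset ι).Nonempty) :
    (x < univ.sup' h f ∧ ∑ j, f j - univ.sup' h f ≤ ε * univ.sup' h f) ↔
      ∃ i, f ∈ bigJumpSet x ε i := by
  constructor
  · rintro hmax
    obtain ⟨i, -, hi⟩ := exists_mem_eq_sup' h f
    rw [hi, ← sum_erase_eq_sub (mem_univ i)] at hmax
    exact ⟨i, hmax⟩
  · rintro ⟨i, hi⟩
    rw [sup'_eq_of_mem_bigJumpSet hf hx hε h hi, ← sum_erase_eq_sub (mem_univ i)]
    exact hi

end BigJump

section Exchangeable

variable {Ω ι : Type*} [MeasurableSpace Ω] [Fintype ι] {μ : Measure Ω}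

lemma ProbabilityTheory.iIndepFun.map_reindex_eq_map {β : Type*} [MeasurableSpace β]
    {X : ι → Ω → β} (hmeas : ∀ i, Measurable (X i)) (hindep : iIndepFun X μ)
    (hident : ∀ i j, μ.map (X i) = μ.map (X j)) (e : ι ≃ ι) :
    μ.map (fun ω i ↦ X (e i) ω) = μ.map (fun ω i ↦ X i ω) := by
  rw [(hindep.precomp e.injective).map_fun_eq_pi_map fun i ↦ (hmeas (e i)).aemeasurable,
    hindep.map_fun_eq_pi_map fun i ↦ (hmeas i).aemeasurable]
  exact congrArg Measure.pi (funext fun i ↦ hident (e i) i)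

lemma measure_preimage_bigJumpSet_eq_of_iid [DecidableEq ι] {X : ι → Ω → ℝ}
    (hmeas : ∀ i, Measurable (X i)) (hindep : iIndepFun X μ)
    (hident : ∀ i j, μ.map (X i) = μ.map (X j)) (x ε : ℝ) (i j : ι) :
    μ ((fun ω k ↦ X k ω) ⁻¹' bigJumpSet x ε i) =
      μ ((fun ω k ↦ X k ω) ⁻¹' bigJumpSet x ε j) := by
  set e := Equiv.swap j i
  have hpre : (fun ω k ↦ X k ω) ⁻¹' bigJumpSet x ε i =
      (fun ω k ↦ X (e k) ω) ⁻¹' bigJumpSet x ε j := by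
    ext ω
    change _ ↔ (fun k ↦ X k ω) ∘ e ∈ bigJumpSet x ε j
    rw [comp_equiv_mem_bigJumpSet_iff, Equiv.swap_apply_left, Set.mem_preimage]
  rw [hpre, ← Measure.map_apply (measurable_pi_lambda _ fun k ↦ hmeas (e k))
      (measurableSet_bigJumpSet x ε j), hindep.map_reindex_eq_map hmeas hident e,
    Measure.map_apply (measurable_pi_lambda _ hmeas) (measurableSet_bigJumpSet x ε j)]

end Exchangeable

/-- combinatorial identity from the proof of Lemma `asymptoticS`. For i.i.d.
nonnegative random variables `X₁,…,Xₙ`, `ε ∈ (0,1)` and `x ≥ 0`, with `M` the maximum,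
`P(M > x, ΣXᵢ − M ≤ εM) = n · P(X₁ > x, Σⱼ₌₂ⁿ Xⱼ ≤ εX₁)`. -/
theorem single_big_jump_identity {Ω : Type*} [MeasurableSpace Ω]
    (μ : Measure Ω) [IsProbabilityMeasure μ]
    (n : ℕ) (hn : 0 < n) (X : Fin n → Ω → ℝ)
    (hmeas : ∀ i, Measurable (X i))
    (hindep : iIndepFun X μ)
    (hident : ∀ i, Measure.map (X i) μ = Measure.map (X ⟨0, hn⟩) μ)
    (hnonneg : ∀ i ω, 0 ≤ X i ω)
    (ε x : ℝ) (hε : ε ∈ Set.Ioo (0 : ℝ) 1) (hx : 0 ≤ x) :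
    μ {ω | x < Finset.univ.sup' ⟨⟨0, hn⟩, Finset.mem_univ _⟩ (fun i => X i ω) ∧
        (∑ i, X i ω) - Finset.univ.sup' ⟨⟨0, hn⟩, Finset.mem_univ _⟩ (fun i => X i ω)
          ≤ ε * Finset.univ.sup' ⟨⟨0, hn⟩, Finset.mem_univ _⟩ (fun i => X i ω)}
      = (n : ENNReal) *
        μ {ω | x < X ⟨0, hn⟩ ω ∧
          ∑ i ∈ Finset.univ.erase (⟨0, hn⟩ : Fin n), X i ω ≤ ε * X ⟨0, hn⟩ ω} := by
  set T : Ω → Fin n → ℝ := fun ω i ↦ X i ω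
  have hevent : {ω | x < univ.sup' ⟨⟨0, hn⟩, mem_univ _⟩ (fun i => X i ω) ∧
      (∑ i, X i ω) - univ.sup' ⟨⟨0, hn⟩, mem_univ _⟩ (fun i => X i ω)
        ≤ ε * univ.sup' ⟨⟨0, hn⟩, mem_univ _⟩ (fun i => X i ω)} =
      ⋃ i, T ⁻¹' bigJumpSet x ε i := by
    ext ω
    simpa only [Set.mem_ofPred_eq, Set.mem_iUnion, Set.mem_preimage] using
      lt_sup'_and_sum_sub_sup'_le_iff (hnonneg · ω) hx hε.2 _
  have hdisj : Pairwise (Function.onFun Disjoint fun i ↦ T ⁻¹' bigJumpSet x ε i) :=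
    fun i j hij ↦ Set.disjoint_left.2 fun ω hi hj ↦
      hij (eq_of_mem_bigJumpSet (hnonneg · ω) hx hε.2 hi hj)
  have hident' : ∀ i j, μ.map (X i) = μ.map (X j) :=
    fun i j ↦ (hident i).trans (hident j).symm
  have hmeasT : Measurable T := measurable_pi_lambda _ hmeas
  rw [hevent, measure_iUnion hdisj fun i ↦ hmeasT (measurableSet_bigJumpSet x ε i), tsum_fintype,
    sum_congr rfl fun i _ ↦
      measure_preimage_bigJumpSet_eq_of_iid hmeas hindep hident' x ε i ⟨0, hn⟩,
    sum_const, card_univ, Fintype.card_fin, nsmul_eq_mul]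
  rfl
end

section
/- Let n ≥ 2. Let X₁ be a nonnegative real random variable with P(X₁ > x) > 0 for every x ∈ ℝ, and let (X₂, …, Xₙ) be a random vector with nonnegative real (hence almost surely finite) coordinates that is independent of X₁. Let ε > 0 and let A ⊆ ℝ^{n−1} be a Borel set. Then lim_{x→∞} P( X₁ > x, Σⱼ₌₂ⁿ Xⱼ ≤ ε·X₁, (X₂, …, Xₙ) ∈ A ) / P( X₁ > x ) = P( (X₂, …, Xₙ) ∈ A ). -/
open MeasureTheory ProbabilityTheory Filter

open scoped ENNReal Topology

/-!
By independence, `P(X > x, Σ Y ≤ εx, Y ∈ A) = P(X > x) P(Σ Y ≤ εx, Y ∈ A)`. On `{X > x}` the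
constraint `Σ Y ≤ εX` is implied by `Σ Y ≤ εx` and fails only on `{Σ Y > εx}`, so the ratio is
squeezed between `P(Σ Y ≤ εx, Y ∈ A)` and that plus `P(Σ Y > εx)`; as `x → ∞` these tend to
`P(Y ∈ A)` and `P(Y ∈ A) + 0` by continuity of measure.
-/

theorem ENNReal.tendsto_div_of_mul_le_of_le_mul {α : Type*} {l : Filter α}
    {m t g h : α → ℝ≥0∞} {a : ℝ≥0∞} (ht₀ : ∀ x, t x ≠ 0) (ht : ∀ x, t x ≠ ∞)
    (hlow : ∀ x, t x * g x ≤ m x) (hup : ∀ x, m x ≤ t x * (g x + h x))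
    (hg : Tendsto g l (𝓝 a)) (hh : Tendsto h l (𝓝 0)) :
    Tendsto (fun x ↦ m x / t x) l (𝓝 a) := by
  refine tendsto_of_tendsto_of_tendsto_of_le_of_le hg (by simpa using hg.add hh)
    (fun x ↦ ?_) (fun x ↦ ENNReal.div_le_of_le_mul' (hup x))
  rw [ENNReal.le_div_iff_mul_le (.inl (ht₀ x)) (.inl (ht x)), mul_comm]
  exact hlow x

section

variable {Ω : Type*} [MeasurableSpace Ω] {μ : Measure Ω}

theorem tendsto_measure_setOf_le_and_atTop (S : Ω → ℝ) (B : Set Ω) :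
    Tendsto (fun c ↦ μ {ω | S ω ≤ c ∧ ω ∈ B}) atTop (𝓝 (μ B)) := by
  have hmono : Monotone fun c ↦ {ω | S ω ≤ c ∧ ω ∈ B} :=
    fun _ _ hcd _ hω ↦ ⟨hω.1.trans hcd, hω.2⟩
  have hunion : ⋃ c, {ω | S ω ≤ c ∧ ω ∈ B} = B :=
    Set.Subset.antisymm (Set.iUnion_subset fun _ _ hω ↦ hω.2)
      fun ω hω ↦ Set.mem_iUnion.2 ⟨S ω, le_rfl, hω⟩
  simpa only [Function.comp_def, hunion] using tendsto_measure_iUnion_atTop (μ := μ) hmono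

theorem tendsto_measure_setOf_lt_atTop [IsFiniteMeasure μ] {S : Ω → ℝ}
    (hS : Measurable S) : Tendsto (fun c ↦ μ {ω | c < S ω}) atTop (𝓝 0) := by
  have hanti : Antitone fun c ↦ {ω | c < S ω} := fun _ _ hcd _ hω ↦ hcd.trans_lt hω
  have hinter : ⋂ c, {ω | c < S ω} = ∅ :=
    Set.eq_empty_of_forall_notMem fun ω hω ↦ lt_irrefl (S ω) (Set.mem_iInter.1 hω (S ω))
  simpa only [Function.comp_def, hinter, measure_empty] using tendsto_measure_iInter_atTop
    (fun c ↦ (measurableSet_lt measurable_const hS).nullMeasurableSet) hanti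
    ⟨0, measure_ne_top μ _⟩

variable {β : Type*} [MeasurableSpace β] {X : Ω → ℝ} {Y : Ω → β} {f : β → ℝ} {A : Set β}
  {ε : ℝ}

theorem ProbabilityTheory.IndepFun.measure_lt_and_mem (hXY : IndepFun X Y μ) {B : Set β}
    (hB : MeasurableSet B) (x : ℝ) :
    μ {ω | x < X ω ∧ Y ω ∈ B} = μ {ω | x < X ω} * μ {ω | Y ω ∈ B} :=
  hXY.measure_inter_preimage_eq_mul _ _ measurableSet_Ioi hB

theorem ProbabilityTheory.IndepFun.measure_lt_mul_le (hXY : IndepFun X Y μ) (hf : Measurable f)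
    (hA : MeasurableSet A) (hε : 0 ≤ ε) (x : ℝ) :
    μ {ω | x < X ω} * μ {ω | f (Y ω) ≤ ε * x ∧ Y ω ∈ A} ≤
      μ {ω | x < X ω ∧ f (Y ω) ≤ ε * X ω ∧ Y ω ∈ A} :=
  calc _ = μ {ω | x < X ω ∧ f (Y ω) ≤ ε * x ∧ Y ω ∈ A} :=
        (hXY.measure_lt_and_mem ((measurableSet_le hf measurable_const).inter hA) x).symm
    _ ≤ _ := measure_mono fun _ ⟨hx, hfY, hA⟩ ↦
        (⟨hx, hfY.trans (mul_le_mul_of_nonneg_left hx.le hε), hA⟩ : _ ∧ _ ∧ _)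

theorem ProbabilityTheory.IndepFun.measure_le_lt_mul (hXY : IndepFun X Y μ) (hf : Measurable f)
    (hA : MeasurableSet A) (x : ℝ) :
    μ {ω | x < X ω ∧ f (Y ω) ≤ ε * X ω ∧ Y ω ∈ A} ≤
      μ {ω | x < X ω} * (μ {ω | f (Y ω) ≤ ε * x ∧ Y ω ∈ A} + μ {ω | ε * x < f (Y ω)}) := by
  have hsplit : {ω | x < X ω ∧ f (Y ω) ≤ ε * X ω ∧ Y ω ∈ A} ⊆
      {ω | x < X ω ∧ f (Y ω) ≤ ε * x ∧ Y ω ∈ A} ∪ {ω | x < X ω ∧ ε * x < f (Y ω)} := by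
    rintro ω ⟨hx, -, hA⟩
    rcases le_or_gt (f (Y ω)) (ε * x) with hle | hlt
    exacts [.inl ⟨hx, hle, hA⟩, .inr ⟨hx, hlt⟩]
  calc _ ≤ _ := measure_mono hsplit
    _ ≤ _ := measure_union_le _ _
    _ = _ := by
      rw [mul_add]
      exact congrArg₂ (· + ·)
        (hXY.measure_lt_and_mem ((measurableSet_le hf measurable_const).inter hA) x)
        (hXY.measure_lt_and_mem (measurableSet_lt measurable_const hf) x)

end

theorem asymptotic_independence_general {Ω : Type*} [MeasurableSpace Ω]
    (μ : Measure Ω) [IsProbabilityMeasure μ]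
    (k : ℕ)
    (X : Ω → ℝ) (Y : Ω → Fin k → ℝ)
    (hY : Measurable Y)
    (htail : ∀ x : ℝ, 0 < μ {ω | x < X ω})
    (hindep : IndepFun X Y μ)
    (ε : ℝ) (hε : 0 < ε)
    (A : Set (Fin k → ℝ)) (hA : MeasurableSet A) :
    Tendsto (fun x : ℝ =>
        μ {ω | x < X ω ∧ (∑ i, Y ω i) ≤ ε * X ω ∧ Y ω ∈ A} / μ {ω | x < X ω})
      atTop (nhds (μ {ω | Y ω ∈ A})) := by
  have hsum : Measurable fun y : Fin k → ℝ ↦ ∑ i, y i := by fun_prop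
  have hεx : Tendsto (ε * ·) atTop atTop := tendsto_id.const_mul_atTop hε
  exact ENNReal.tendsto_div_of_mul_le_of_le_mul (fun x ↦ (htail x).ne')
    (fun _ ↦ measure_ne_top μ _) (hindep.measure_lt_mul_le hsum hA hε.le)
    (hindep.measure_le_lt_mul hsum hA)
    ((tendsto_measure_setOf_le_and_atTop _ _).comp hεx)
    ((tendsto_measure_setOf_lt_atTop (hsum.comp hY)).comp hεx)

/-- analytic core of Lemma `asymptoticS`. Let `X₁ ≥ 0` have an everywhere
positive tail, and let the nonnegative random vector `(X₂,…,Xₙ) ∈ ℝ^{n−1}` (here `Y` with values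
in `ℝ^k`, `k = n−1 ≥ 1`) be independent of `X₁`. Then for every `ε > 0` and Borel `A`,
`P(X₁ > x, Σⱼ Yⱼ ≤ εX₁, Y ∈ A) / P(X₁ > x) → P(Y ∈ A)` as `x → ∞`. -/
theorem asymptotic_independence {Ω : Type*} [MeasurableSpace Ω]
    (μ : Measure Ω) [IsProbabilityMeasure μ]
    (k : ℕ) (hk : 0 < k)
    (X : Ω → ℝ) (Y : Ω → Fin k → ℝ)
    (hX : Measurable X) (hY : Measurable Y)
    (hXnn : ∀ ω, 0 ≤ X ω) (hYnn : ∀ ω i, 0 ≤ Y ω i)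
    (htail : ∀ x : ℝ, 0 < μ {ω | x < X ω})
    (hindep : IndepFun X Y μ)
    (ε : ℝ) (hε : 0 < ε)
    (A : Set (Fin k → ℝ)) (hA : MeasurableSet A) :
    Tendsto (fun x : ℝ =>
        μ {ω | x < X ω ∧ (∑ i, Y ω i) ≤ ε * X ω ∧ Y ω ∈ A} / μ {ω | x < X ω})
      atTop (nhds (μ {ω | Y ω ∈ A})) :=
  asymptotic_independence_general μ k X Y hY htail hindep ε hε A hA
end

section
/- Let n ≥ 1 and let X₁, …, Xₙ be independent, identically distributed, nonnegative real random variables with P(X₁ > x) > 0 for every x ∈ ℝ. Let ε ∈ (0,1) and set M := max{X₁, …, Xₙ}. Then lim_{x→∞} P( M > x and (Σᵢ₌₁ⁿ Xᵢ) − M ≤ ε·M ) / P( X₁ > x ) = n. -/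
/-!
On the event that `X i` exceeds `x` while the other summands add up to at most `ε x`, the
maximum is `X i` and the rest is at most `ε M`; for `ε ≤ 1` these `n` events are disjoint and, by
independence, each has probability `P(X₁ > x) · P(∑_{j ≠ i} X j ≤ ε x)`, where the second factor
tends to `1`. Conversely the event forces `M > x`, which has probability at most `n P(X₁ > x)`.
-/

open MeasureTheory ProbabilityTheory Finset Filter Topology

namespace ProbabilityTheory

variable {Ω ι : Type*}

def singleBigJumpSet [Fintype ι] [Nonempty ι] (X : ι → Ω → ℝ) (ε x : ℝ) : Set Ω :=
  {ω | x < univ.sup' univ_nonempty (X · ω) ∧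
    ∑ i, X i ω - univ.sup' univ_nonempty (X · ω) ≤ ε * univ.sup' univ_nonempty (X · ω)}

section Events

variable [Fintype ι] [DecidableEq ι] {X : ι → Ω → ℝ}

lemma pairwise_disjoint_lt_and_sum_erase_le (hX : ∀ i ω, 0 ≤ X i ω) {a b : ℝ} (hba : b ≤ a) :
    Pairwise (Function.onFun Disjoint
      fun i => {ω | a < X i ω ∧ ∑ j ∈ univ.erase i, X j ω ≤ b}) := by
  intro i j hij
  refine Set.disjoint_left.2 fun ω ⟨_, hrest⟩ ⟨hj, _⟩ => ?_
  have : X j ω ≤ ∑ k ∈ univ.erase i, X k ω :=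
    single_le_sum (fun k _ => hX k ω) (mem_erase.2 ⟨hij.symm, mem_univ j⟩)
  linarith

lemma lt_and_sum_erase_le_subset_singleBigJumpSet [Nonempty ι] {ε : ℝ} (hε : 0 ≤ ε) (x : ℝ)
    (i : ι) :
    {ω | x < X i ω ∧ ∑ j ∈ univ.erase i, X j ω ≤ ε * x} ⊆ singleBigJumpSet X ε x := by
  rintro ω ⟨hx, hrest⟩
  have hiM : X i ω ≤ univ.sup' univ_nonempty (X · ω) := le_sup' (X · ω) (mem_univ i)
  have hsplit := add_sum_erase univ (X · ω) (mem_univ i)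
  refine ⟨hx.trans_le hiM, ?_⟩
  nlinarith

end Events

variable [MeasurableSpace Ω] {μ : Measure Ω}

lemma measure_lt_sup'_le_sum (s : Finset ι) (hs : s.Nonempty) (X : ι → Ω → ℝ) (x : ℝ) :
    μ {ω | x < s.sup' hs (X · ω)} ≤ ∑ i ∈ s, μ {ω | x < X i ω} := by
  calc μ {ω | x < s.sup' hs (X · ω)} = μ (⋃ i ∈ s, {ω | x < X i ω}) := by
        congr 1
        ext ω
        simp [lt_sup'_iff]
    _ ≤ _ := measure_biUnion_finset_le s _

lemma tendsto_measure_le_const_mul_atTop (Y : Ω → ℝ) {c : ℝ} (hc : 0 < c) :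
    Tendsto (fun x => μ {ω | Y ω ≤ c * x}) atTop (𝓝 (μ Set.univ)) := by
  have hmono : Monotone fun x : ℝ => {ω | Y ω ≤ x} := fun _ _ hab _ hω => le_trans hω hab
  have hunion : ⋃ x : ℝ, {ω | Y ω ≤ x} = Set.univ :=
    Set.iUnion_eq_univ_iff.2 fun ω => ⟨Y ω, show Y ω ≤ Y ω from le_rfl⟩
  have h := tendsto_measure_iUnion_atTop (μ := μ) hmono
  rw [hunion] at h
  exact h.comp (tendsto_id.const_mul_atTop hc)

lemma measure_lt_and_sum_le_eq_mul {X : ι → Ω → ℝ} (hmeas : ∀ i, Measurable (X i))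
    (hindep : iIndepFun X μ) {s : Finset ι} {i : ι} (hi : i ∉ s) (a b : ℝ) :
    μ {ω | a < X i ω ∧ ∑ j ∈ s, X j ω ≤ b} =
      μ {ω | a < X i ω} * μ {ω | ∑ j ∈ s, X j ω ≤ b} := by
  have hind : IndepFun (X i) (∑ j ∈ s, X j) μ :=
    (hindep.indepFun_finsetSum_of_notMem hmeas hi).symm
  simpa [Set.preimage, Finset.sum_apply, Set.ofPred_and] using
    hind.measure_inter_preimage_eq_mul (s := Set.Ioi a) (t := Set.Iic b)
      measurableSet_Ioi measurableSet_Iic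

lemma sum_measure_mul_le_measure_singleBigJumpSet [Fintype ι] [DecidableEq ι] [Nonempty ι]
    {X : ι → Ω → ℝ} (hmeas : ∀ i, Measurable (X i))
    (hindep : iIndepFun X μ) (hX : ∀ i ω, 0 ≤ X i ω) {ε x : ℝ} (hε₀ : 0 ≤ ε) (hε₁ : ε ≤ 1)
    (hx : 0 ≤ x) :
    ∑ i, μ {ω | x < X i ω} * μ {ω | ∑ j ∈ univ.erase i, X j ω ≤ ε * x} ≤
      μ (singleBigJumpSet X ε x) := by
  have hmeasB : ∀ i, MeasurableSet {ω | x < X i ω ∧ ∑ j ∈ univ.erase i, X j ω ≤ ε * x} :=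
    fun i => (measurableSet_lt measurable_const (hmeas i)).inter
      (measurableSet_le (Finset.measurable_sum _ fun j _ => hmeas j) measurable_const)
  calc ∑ i, μ {ω | x < X i ω} * μ {ω | ∑ j ∈ univ.erase i, X j ω ≤ ε * x}
      = ∑ i, μ {ω | x < X i ω ∧ ∑ j ∈ univ.erase i, X j ω ≤ ε * x} := by
        simp only [measure_lt_and_sum_le_eq_mul hmeas hindep (notMem_erase _ _)]
    _ = μ (⋃ i, {ω | x < X i ω ∧ ∑ j ∈ univ.erase i, X j ω ≤ ε * x}) := by
        rw [measure_iUnion (pairwise_disjoint_lt_and_sum_erase_le hX (mul_le_of_le_one_left hx hε₁)) hmeasB,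
          tsum_fintype]
    _ ≤ μ (singleBigJumpSet X ε x) :=
        measure_mono (Set.iUnion_subset (lt_and_sum_erase_le_subset_singleBigJumpSet hε₀ x))

theorem tendsto_measure_singleBigJumpSet_div_tail [IsProbabilityMeasure μ] [Fintype ι]
    [Nonempty ι] {X : ι → Ω → ℝ} (hmeas : ∀ i, Measurable (X i)) (hindep : iIndepFun X μ)
    (hX : ∀ i ω, 0 ≤ X i ω) {T : ℝ → ENNReal} (hT : ∀ i x, μ {ω | x < X i ω} = T x)
    (hT₀ : ∀ x, T x ≠ 0) {ε : ℝ} (hε₀ : 0 < ε) (hε₁ : ε ≤ 1) :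
    Tendsto (fun x => μ (singleBigJumpSet X ε x) / T x) atTop (𝓝 (Fintype.card ι)) := by
  classical
  have hT_top : ∀ x, T x ≠ ⊤ := fun x => hT (Classical.arbitrary ι) x ▸ measure_ne_top μ _
  have hrest : Tendsto (fun x => ∑ i, μ {ω | ∑ j ∈ univ.erase i, X j ω ≤ ε * x}) atTop
      (𝓝 (Fintype.card ι)) := by
    simpa using tendsto_finsetSum univ fun i _ => tendsto_measure_le_const_mul_atTop (μ := μ)
      (fun ω => ∑ j ∈ univ.erase i, X j ω) hε₀
  refine tendsto_of_tendsto_of_tendsto_of_le_of_le' hrest tendsto_const_nhds ?_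
    (Eventually.of_forall fun x => ENNReal.div_le_of_le_mul ?_)
  · filter_upwards [eventually_ge_atTop 0] with x hx
    rw [ENNReal.le_div_iff_mul_le (.inl (hT₀ x)) (.inl (hT_top x)), sum_mul]
    simpa only [hT, mul_comm] using
      sum_measure_mul_le_measure_singleBigJumpSet hmeas hindep hX hε₀.le hε₁ hx
  · calc μ (singleBigJumpSet X ε x) ≤ μ {ω | x < univ.sup' univ_nonempty (X · ω)} :=
          measure_mono fun _ hω => hω.1
      _ ≤ ∑ i, μ {ω | x < X i ω} := measure_lt_sup'_le_sum _ _ _ _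
      _ = Fintype.card ι * T x := by simp [hT]

end ProbabilityTheory

open ProbabilityTheory in
/-- single-big-jump asymptotics underlying Lemma `asymptoticS`. For i.i.d.
nonnegative random variables `X₁,…,Xₙ` with everywhere positive tails and `ε ∈ (0,1)`, with `M`
the maximum, `P(M > x, ΣXᵢ − M ≤ εM) / P(X₁ > x) → n` as `x → ∞`. -/
theorem single_big_jump_limit {Ω : Type*} [MeasurableSpace Ω]
    (μ : Measure Ω) [IsProbabilityMeasure μ]
    (n : ℕ) (hn : 0 < n) (X : Fin n → Ω → ℝ)
    (hmeas : ∀ i, Measurable (X i))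
    (hindep : iIndepFun X μ)
    (hident : ∀ i, Measure.map (X i) μ = Measure.map (X ⟨0, hn⟩) μ)
    (hnonneg : ∀ i ω, 0 ≤ X i ω)
    (htail : ∀ x : ℝ, 0 < μ {ω | x < X ⟨0, hn⟩ ω})
    (ε : ℝ) (hε : ε ∈ Set.Ioo (0 : ℝ) 1) :
    Tendsto (fun x : ℝ =>
        μ {ω | x < Finset.univ.sup' ⟨⟨0, hn⟩, Finset.mem_univ _⟩ (fun i => X i ω) ∧
            (∑ i, X i ω) - Finset.univ.sup' ⟨⟨0, hn⟩, Finset.mem_univ _⟩ (fun i => X i ω)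
              ≤ ε * Finset.univ.sup' ⟨⟨0, hn⟩, Finset.mem_univ _⟩ (fun i => X i ω)}
          / μ {ω | x < X ⟨0, hn⟩ ω})
      atTop (nhds (n : ENNReal)) := by
  have : Nonempty (Fin n) := ⟨⟨0, hn⟩⟩
  have hT : ∀ i x, μ {ω | x < X i ω} = μ {ω | x < X ⟨0, hn⟩ ω} := fun i x => by
    have h := congrArg (· (Set.Ioi x)) (hident i)
    simp only [Measure.map_apply (hmeas _) measurableSet_Ioi] at h
    exact h
  have h := tendsto_measure_singleBigJumpSet_div_tail hmeas hindep hnonneg hT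
    (fun x => (htail x).ne') hε.1 hε.2.le
  rwa [Fintype.card_fin] at h
end
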